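/- Let H = [[A,B],[C,D]] ∈ M_N({±1}) be Hadamard with A ∈ M_r({±1}) a Hadamard matrix (so AAᵗ = r·I_r) and r ≤ d = N − r, r < N. Then Pol(D) = (1/√N)(D − E) where E = C·X_A·B with X_A = Aᵗ/(r + √(rN)), and ‖E‖_∞ ≤ r√r / (√r + √N). -/

import Mathlib

/-!
Orthogonality of the columns of `H` gives `DᵀD = N - BᵀB`, `DᵀC = -BᵀA` and
`CᵀC = (N - r)·1`, so with `X = C Aᵀ B` both `DᵀX = -r·BᵀB` and `XᵀX = (N - r) r·BᵀB` are
multiples of `BᵀB`. Hence `(D - X/s)ᵀ(D - X/s) = N·1` as soon as `s² = 2rs + (N - r)r`, whose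
positive root is `s = r + √(rN)`. Moreover `(D - X/s)ᵀD = N·1 - (1 - r/s)·BᵀB` lies between `DᵀD`
and `N·1`, so it is positive semidefinite and `U = (D - X/s)/√N` is the orthogonal factor in the
polar decomposition of `D`. Finally the entries of `X` are bounded by `r²`, and
`r²/s = r√r/(√r + √N)`.
-/

open Matrix

attribute [local instance] Matrix.normedAddCommGroup

section

open scoped ComplexOrder

/-- The positive semidefinite square root of a positive semidefinite matrix (as in the older
Mathlib, where it was `Matrix.PosSemidef.sqrt`; it has since been removed). -/
noncomputable def Matrix.PosSemidef.sqrt {n 𝕜 : Type*} [Fintype n] [RCLike 𝕜] [DecidableEq n]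
    {A : Matrix n n 𝕜} (hA : A.PosSemidef) : Matrix n n 𝕜 :=
  hA.isHermitian.eigenvectorUnitary.1 *
    Matrix.diagonal (((↑) : ℝ → 𝕜) ∘ Real.sqrt ∘ hA.isHermitian.eigenvalues) *
    (star hA.isHermitian.eigenvectorUnitary : Matrix n n 𝕜)

end

section PolarDecomposition

open scoped MatrixOrder ComplexOrder

variable {n 𝕜 : Type*} [Fintype n] [DecidableEq n] [RCLike 𝕜]

theorem Matrix.PosSemidef.sqrt_eq_of_mul_self {A M : Matrix n n 𝕜} (hA : A.PosSemidef)
    (hM : M.PosSemidef) (h : M * M = A) : hA.sqrt = M := by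
  have hcfc : hA.sqrt = cfc Real.sqrt A := by
    rw [hA.isHermitian.cfc_eq, Matrix.IsHermitian.cfc, Unitary.conjStarAlgAut_apply]
    rfl
  rw [hcfc, ← cfcₙ_eq_cfc (hf0 := Real.sqrt_zero), ← CFC.sqrt_eq_real_sqrt A hA.nonneg]
  exact CFC.sqrt_unique h hM.nonneg

theorem Matrix.eq_mul_sqrt_conjTranspose_mul_self {U D : Matrix n n 𝕜} (hU : Uᴴ * U = 1)
    (hUD : (Uᴴ * D).PosSemidef) : D = U * (posSemidef_conjTranspose_mul_self D).sqrt := by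
  have hUU : U * Uᴴ = 1 := mul_eq_one_comm.mp hU
  have hsq : (Uᴴ * D) * (Uᴴ * D) = Dᴴ * D :=
    calc (Uᴴ * D) * (Uᴴ * D) = (Uᴴ * D)ᴴ * (Uᴴ * D) := by rw [hUD.isHermitian.eq]
      _ = Dᴴ * D := by
        rw [conjTranspose_mul, conjTranspose_conjTranspose, Matrix.mul_assoc,
          ← Matrix.mul_assoc U, hUU, Matrix.one_mul]
  rw [(posSemidef_conjTranspose_mul_self D).sqrt_eq_of_mul_self hUD hsq, ← Matrix.mul_assoc, hUU,
    Matrix.one_mul]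

end PolarDecomposition

namespace Matrix

variable {l m n : Type*}

theorem inv_sqrt_smul_transpose_mul_self_eq_one [Fintype m] [DecidableEq m]
    {M : Matrix m m ℝ} {c : ℝ} (hc : 0 < c) (h : Mᵀ * M = c • 1) :
    ((√c)⁻¹ • M)ᵀ * ((√c)⁻¹ • M) = 1 := by
  rw [transpose_smul, Matrix.smul_mul, Matrix.mul_smul, h, smul_smul, smul_smul, ← mul_inv,
    Real.mul_self_sqrt hc.le, inv_mul_cancel₀ hc.ne', one_smul]

theorem transpose_mul_self_eq_smul_one [Fintype m] [DecidableEq m] {M : Matrix m m ℝ} {c : ℝ}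
    (h : M * Mᵀ = c • 1) : Mᵀ * M = c • 1 := by
  rcases eq_or_ne c 0 with rfl | hc
  · rw [zero_smul, ← conjTranspose_eq_transpose_of_trivial,
      self_mul_conjTranspose_eq_zero] at h
    rw [h, zero_smul, transpose_zero, Matrix.zero_mul]
  · have hinv : M * (c⁻¹ • Mᵀ) = 1 := by
      rw [Matrix.mul_smul, h, smul_smul, inv_mul_cancel₀ hc, one_smul]
    rw [← smul_inv_smul₀ hc (Mᵀ * M), ← smul_mul, mul_eq_one_comm.mp hinv]

theorem fromBlocks_transpose_mul_self_eq_smul_one [Fintype m] [Fintype n] [DecidableEq m]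
    [DecidableEq n] {R : Type*} [CommRing R] {A : Matrix m m R} {B : Matrix m n R}
    {C : Matrix n m R} {D : Matrix n n R} {c : R}
    (h : (fromBlocks A B C D)ᵀ * fromBlocks A B C D = c • 1) :
    Aᵀ * A + Cᵀ * C = c • 1 ∧ Bᵀ * A + Dᵀ * C = 0 ∧ Bᵀ * B + Dᵀ * D = c • 1 := by
  rw [fromBlocks_transpose, fromBlocks_multiply, ← fromBlocks_one, fromBlocks_smul] at h
  simp only [smul_zero] at h
  obtain ⟨h₁₁, -, h₂₁, h₂₂⟩ := fromBlocks_inj.mp h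
  exact ⟨h₁₁, h₂₁, h₂₂⟩

theorem PosSemidef.smul_one_sub_smul [DecidableEq m] {P : Matrix m m ℝ} {c a : ℝ} (hc : 0 ≤ c)
    (ha₀ : 0 ≤ a) (ha₁ : a ≤ 1) (h : (c • 1 - P).PosSemidef) : (c • 1 - a • P).PosSemidef := by
  have hsplit : c • 1 - a • P = a • (c • 1 - P) + (1 - a) • (c • (1 : Matrix m m ℝ)) := by
    module
  rw [hsplit]
  exact (h.smul ha₀).add ((PosSemidef.one.smul hc).smul (sub_nonneg.mpr ha₁))

theorem norm_mul_le_card_mul [Fintype l] [Fintype m] [Fintype n] {α : Type*} [NormedRing α]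
    (A : Matrix l m α) (B : Matrix m n α) : ‖A * B‖ ≤ Fintype.card m * ‖A‖ * ‖B‖ := by
  refine (norm_le_iff (by positivity)).mpr fun i j => ?_
  calc ‖(A * B) i j‖ ≤ ∑ k, ‖A i k‖ * ‖B k j‖ :=
        (norm_sum_le _ _).trans (Finset.sum_le_sum fun k _ => norm_mul_le _ _)
    _ ≤ ∑ _k : m, ‖A‖ * ‖B‖ := Finset.sum_le_sum fun k _ =>
        mul_le_mul (norm_entry_le_entrywise_sup_norm A) (norm_entry_le_entrywise_sup_norm B)
          (norm_nonneg _) (norm_nonneg _)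
    _ = Fintype.card m * ‖A‖ * ‖B‖ := by
        rw [Finset.sum_const, nsmul_eq_mul, mul_assoc]; rfl

theorem norm_le_one_of_forall_eq_one_or_eq_neg_one [Fintype m] [Fintype n] {α : Type*}
    [NormedRing α] [NormOneClass α] {M : Matrix m n α} (h : ∀ i j, M i j = 1 ∨ M i j = -1) :
    ‖M‖ ≤ 1 :=
  (norm_le_iff zero_le_one).mpr fun i j => by rcases h i j with h | h <;> simp [h]

end Matrix

section HadamardBlocks

variable {m n : Type*} [Fintype m] [Fintype n] [DecidableEq m]
  {A : Matrix m m ℝ} {B : Matrix m n ℝ} {C : Matrix n m ℝ} {D : Matrix n n ℝ} {r c N t : ℝ}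

theorem fromBlocks_hadamard_relations [DecidableEq n]
    (hH : fromBlocks A B C D * (fromBlocks A B C D)ᵀ = N • 1) (hA : A * Aᵀ = r • 1) :
    Cᵀ * C = (N - r) • 1 ∧ Dᵀ * C = -(Bᵀ * A) ∧ Dᵀ * D = N • 1 - Bᵀ * B := by
  obtain ⟨hAC, hBD, hDB⟩ :=
    fromBlocks_transpose_mul_self_eq_smul_one (transpose_mul_self_eq_smul_one hH)
  refine ⟨?_, eq_neg_of_add_eq_zero_right hBD, eq_sub_of_add_eq' hDB⟩
  rw [eq_sub_of_add_eq' hAC, transpose_mul_self_eq_smul_one hA, sub_smul]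

/-- `C Aᵀ B = (r + √(rN)) • E`, where `E = C X_A B` in the paper's notation. -/
def hadamardCorrection (A : Matrix m m ℝ) (B : Matrix m n ℝ) (C : Matrix n m ℝ) :
    Matrix n n ℝ :=
  C * Aᵀ * B

theorem transpose_mul_hadamardCorrection (hA : A * Aᵀ = r • 1) (hDC : Dᵀ * C = -(Bᵀ * A)) :
    Dᵀ * hadamardCorrection A B C = -(r • (Bᵀ * B)) := by
  rw [hadamardCorrection, ← Matrix.mul_assoc, ← Matrix.mul_assoc, hDC, Matrix.neg_mul,
    Matrix.neg_mul, Matrix.mul_assoc Bᵀ, hA, Matrix.mul_smul, Matrix.mul_one, Matrix.smul_mul]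

theorem hadamardCorrection_transpose_mul_self (hA : A * Aᵀ = r • 1) (hC : Cᵀ * C = c • 1) :
    (hadamardCorrection A B C)ᵀ * hadamardCorrection A B C = (c * r) • (Bᵀ * B) := by
  calc (hadamardCorrection A B C)ᵀ * hadamardCorrection A B C
      = Bᵀ * (A * (Cᵀ * C) * Aᵀ) * B := by
        simp only [hadamardCorrection, Matrix.transpose_mul, Matrix.transpose_transpose,
          Matrix.mul_assoc]
    _ = (c * r) • (Bᵀ * B) := by
        rw [hC, Matrix.mul_smul, Matrix.mul_one, Matrix.smul_mul, hA, smul_smul, Matrix.mul_smul,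
          Matrix.mul_one, Matrix.smul_mul]

theorem sub_smul_hadamardCorrection_transpose_mul [DecidableEq n] (hA : A * Aᵀ = r • 1)
    (hDC : Dᵀ * C = -(Bᵀ * A)) (hD : Dᵀ * D = N • 1 - Bᵀ * B) :
    (D - t • hadamardCorrection A B C)ᵀ * D = N • 1 - (1 - t * r) • (Bᵀ * B) := by
  have hXD : (hadamardCorrection A B C)ᵀ * D = -(r • (Bᵀ * B)) := by
    simpa [Matrix.transpose_mul] using
      congrArg Matrix.transpose (transpose_mul_hadamardCorrection (B := B) hA hDC)
  rw [Matrix.transpose_sub, Matrix.transpose_smul, Matrix.sub_mul, Matrix.smul_mul, hD, hXD]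
  module

theorem sub_smul_hadamardCorrection_transpose_mul_self [DecidableEq n] (hA : A * Aᵀ = r • 1)
    (hC : Cᵀ * C = c • 1) (hDC : Dᵀ * C = -(Bᵀ * A)) (hD : Dᵀ * D = N • 1 - Bᵀ * B) :
    (D - t • hadamardCorrection A B C)ᵀ * (D - t • hadamardCorrection A B C)
      = N • 1 + (2 * t * r + t ^ 2 * c * r - 1) • (Bᵀ * B) := by
  rw [Matrix.mul_sub, sub_smul_hadamardCorrection_transpose_mul hA hDC hD, Matrix.mul_smul,
    Matrix.transpose_sub, Matrix.sub_mul, transpose_mul_hadamardCorrection hA hDC,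
    Matrix.transpose_smul, Matrix.smul_mul, hadamardCorrection_transpose_mul_self hA hC]
  module

theorem posSemidef_sub_smul_hadamardCorrection_transpose_mul [DecidableEq n] (hN : 0 ≤ N)
    (hA : A * Aᵀ = r • 1) (hDC : Dᵀ * C = -(Bᵀ * A)) (hD : Dᵀ * D = N • 1 - Bᵀ * B)
    (htr₀ : 0 ≤ t * r) (htr₁ : t * r ≤ 1) :
    ((D - t • hadamardCorrection A B C)ᵀ * D).PosSemidef := by
  rw [sub_smul_hadamardCorrection_transpose_mul hA hDC hD]
  refine PosSemidef.smul_one_sub_smul hN (sub_nonneg.mpr htr₁) (sub_le_self _ htr₀) ?_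
  simpa [hD] using posSemidef_conjTranspose_mul_self D

end HadamardBlocks

theorem norm_smul_hadamardCorrection_le {m n : Type*} [Fintype m] [Fintype n] {t : ℝ}
    {A : Matrix m m ℝ} {B : Matrix m n ℝ} {C : Matrix n m ℝ} (ht : 0 ≤ t) (hA : ‖A‖ ≤ 1)
    (hB : ‖B‖ ≤ 1) (hC : ‖C‖ ≤ 1) : ‖t • hadamardCorrection A B C‖ ≤ t * Fintype.card m ^ 2 := by
  have := Matrix.normSMulClass (R := ℝ) (α := ℝ) (m := n) (n := n)
  rw [norm_smul, Real.norm_of_nonneg ht]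
  gcongr
  calc ‖C * Aᵀ * B‖ ≤ Fintype.card m * (Fintype.card m * ‖C‖ * ‖Aᵀ‖) * ‖B‖ :=
        (norm_mul_le_card_mul _ B).trans (by gcongr; exact norm_mul_le_card_mul C Aᵀ)
    _ ≤ Fintype.card m * (Fintype.card m * 1 * 1) * 1 := by rw [norm_transpose]; gcongr
    _ = Fintype.card m ^ 2 := by ring

theorem inv_add_sqrt_mul_mul_le_one {r N : ℝ} (hr : 0 ≤ r) : (r + √(r * N))⁻¹ * r ≤ 1 :=
  inv_mul_le_one_of_le₀ (le_add_of_nonneg_right (Real.sqrt_nonneg _)) (by positivity)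

theorem hadamard_coeff_eq_zero {r N : ℝ} (hr : 0 < r) (hN : 0 ≤ N) :
    2 * (r + √(r * N))⁻¹ * r + ((r + √(r * N))⁻¹) ^ 2 * (N - r) * r - 1 = 0 := by
  have hs : 0 < r + √(r * N) := by positivity
  have hsq : √(r * N) ^ 2 = r * N := Real.sq_sqrt (by positivity)
  field_simp
  linear_combination -hsq

theorem hadamard_coeff_smul_eq_zero {r : ℕ} {n : Type*} [Fintype n] {N : ℝ} (hN : 0 ≤ N)
    (B : Matrix (Fin r) n ℝ) :
    (2 * ((r : ℝ) + √(r * N))⁻¹ * r + (((r : ℝ) + √(r * N))⁻¹) ^ 2 * (N - r) * r - 1) •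
      (Bᵀ * B) = 0 := by
  rcases Nat.eq_zero_or_pos r with rfl | hr
  · rw [Matrix.empty_mul_empty, smul_zero]
  · rw [hadamard_coeff_eq_zero (by exact_mod_cast hr) hN, zero_smul]

theorem inv_add_sqrt_mul_mul_sq {r N : ℝ} (hr : 0 ≤ r) (hN : 0 < N) :
    (r + √(r * N))⁻¹ * r ^ 2 = r * √r / (√r + √N) := by
  have hsplit : r + √(r * N) = √r * (√r + √N) := by
    rw [Real.sqrt_mul hr, mul_add, Real.mul_self_sqrt hr]
  rcases hr.eq_or_lt with rfl | hpos
  · simp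
  · have : 0 < √r := Real.sqrt_pos.mpr hpos
    rw [hsplit]
    field_simp
    exact (Real.sq_sqrt hr).symm

theorem stmt_8_general (N r d : ℕ) (hrN : r < N)
    (A : Matrix (Fin r) (Fin r) ℝ) (B : Matrix (Fin r) (Fin d) ℝ)
    (C : Matrix (Fin d) (Fin r) ℝ) (D : Matrix (Fin d) (Fin d) ℝ)
    (hsign : ∀ i j, Matrix.fromBlocks A B C D i j = 1 ∨
      Matrix.fromBlocks A B C D i j = -1)
    (hH : Matrix.fromBlocks A B C D * (Matrix.fromBlocks A B C D)ᵀ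
      = (N : ℝ) • 1)
    (hAHad : A * Aᵀ = (r : ℝ) • 1) :
    letI E := ((r : ℝ) + Real.sqrt (r * N))⁻¹ • (C * Aᵀ * B)
    letI U := (Real.sqrt N)⁻¹ • (D - E)
    Uᵀ * U = 1 ∧ D = U * (Matrix.posSemidef_conjTranspose_mul_self D).sqrt ∧
      ‖E‖ ≤ r * Real.sqrt r / (Real.sqrt r + Real.sqrt N) := by
  set t := ((r : ℝ) + √(r * N))⁻¹
  have hE : t • (C * Aᵀ * B) = t • hadamardCorrection A B C := rfl
  have hN : (0 : ℝ) < N := by exact_mod_cast r.zero_le.trans_lt hrN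
  have ht : 0 ≤ t := by positivity
  obtain ⟨hC, hDC, hD⟩ := fromBlocks_hadamard_relations hH hAHad
  have hU : ((√N)⁻¹ • (D - t • hadamardCorrection A B C))ᵀ *
      ((√N)⁻¹ • (D - t • hadamardCorrection A B C)) = 1 := by
    refine inv_sqrt_smul_transpose_mul_self_eq_one hN ?_
    rw [sub_smul_hadamardCorrection_transpose_mul_self hAHad hC hDC hD,
      hadamard_coeff_smul_eq_zero hN.le, add_zero]
  have hUD := (posSemidef_sub_smul_hadamardCorrection_transpose_mul hN.le hAHad hDC hD
    (by positivity) (inv_add_sqrt_mul_mul_le_one r.cast_nonneg)).smul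
      (inv_nonneg.mpr (Real.sqrt_nonneg (N : ℝ)))
  rw [← Matrix.smul_mul, ← transpose_smul, ← conjTranspose_eq_transpose_of_trivial] at hUD
  rw [hE]
  refine ⟨hU, ?_, ?_⟩
  · rw [← conjTranspose_eq_transpose_of_trivial] at hU
    exact eq_mul_sqrt_conjTranspose_mul_self hU hUD
  · calc ‖t • hadamardCorrection A B C‖ ≤ t * Fintype.card (Fin r) ^ 2 :=
        norm_smul_hadamardCorrection_le ht
          (norm_le_one_of_forall_eq_one_or_eq_neg_one fun i j => hsign (.inl i) (.inl j))
          (norm_le_one_of_forall_eq_one_or_eq_neg_one fun i j => hsign (.inl i) (.inr j))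
          (norm_le_one_of_forall_eq_one_or_eq_neg_one fun i j => hsign (.inr i) (.inl j))
      _ = _ := by rw [Fintype.card_fin]; exact inv_add_sqrt_mul_mul_sq r.cast_nonneg hN

/-- Let `H = [[A,B],[C,D]] ∈ M_N(±1)` be Hadamard with `A ∈ M_r(±1)` itself a
Hadamard matrix (`AAᵗ = r·I`), `r ≤ d = N − r` and `r < N`. Then
`Pol(D) = (1/√N)(D − E)` where `E = C·(Aᵗ/(r + √(rN)))·B`, and
`‖E‖_∞ ≤ r√r / (√r + √N)`. -/
theorem stmt_8 (N r d : ℕ) (hN : N = r + d) (hrd : r ≤ d) (hrN : r < N)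
    (A : Matrix (Fin r) (Fin r) ℝ) (B : Matrix (Fin r) (Fin d) ℝ)
    (C : Matrix (Fin d) (Fin r) ℝ) (D : Matrix (Fin d) (Fin d) ℝ)
    (hsign : ∀ i j, Matrix.fromBlocks A B C D i j = 1 ∨
      Matrix.fromBlocks A B C D i j = -1)
    (hH : Matrix.fromBlocks A B C D * (Matrix.fromBlocks A B C D)ᵀ
      = (N : ℝ) • 1)
    (hAHad : A * Aᵀ = (r : ℝ) • 1) :
    letI E := ((r : ℝ) + Real.sqrt (r * N))⁻¹ • (C * Aᵀ * B)
    letI U := (Real.sqrt N)⁻¹ • (D - E)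
    Uᵀ * U = 1 ∧ D = U * (Matrix.posSemidef_conjTranspose_mul_self D).sqrt ∧
      ‖E‖ ≤ r * Real.sqrt r / (Real.sqrt r + Real.sqrt N) :=
  stmt_8_general N r d hrN A B C D hsign hH hAHad
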